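/- For every n and every ω ∈ Ω_n = {0,1,2}^n, the three-type evolution step commutes with the projection Π_1 in the sense that Π_1(Z(ω)) = Z^{(2)}(Π_1(ω)). -/

import Mathlib

open MeasureTheory ProbabilityTheory Filter Topology

namespace TASEP

/-- Extension of a string `ω ∈ {0,1,2}ⁿ` to all integer indices (0-based), with the
boundary convention that out-of-range entries on the left are `2` and on the right are `0`
(so that the boundary inequalities in the update rule are automatically satisfied, and
no out-of-range pair is ever swapped). -/
def extStr (n : ℕ) (ω : Fin n → Fin 3) (i : ℤ) : Fin 3 :=
  if h : 0 ≤ i ∧ i < n then ω ⟨i.toNat, by omega⟩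
  else if i < 0 then 2 else 0

/-- The (1-based) `i`-th entry of the string `ω`. -/
def entry (n : ℕ) (ω : Fin n → Fin 3) (i : ℕ) : Fin 3 := extStr n ω ((i : ℤ) - 1)

/-- Whether the (0-based) pair of positions `(i, i+1)` is swapped by the three-type
evolution step: either the generic rule `ω_{i-1} ≥ ω_i < ω_{i+1} ≥ ω_{i+2}` (out-of-range
inequalities considered satisfied), or the priority rule: in the pattern `012` the pair
`12` swaps (into `021`). -/
def swapPair (n : ℕ) (ω : Fin n → Fin 3) (i : ℤ) : Bool :=
  decide ((extStr n ω i < extStr n ω (i+1) ∧ extStr n ω i ≤ extStr n ω (i-1) ∧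
      extStr n ω (i+2) ≤ extStr n ω (i+1))
    ∨ (extStr n ω (i-1) = 0 ∧ extStr n ω i = 1 ∧ extStr n ω (i+1) = 2))

/-- The three-type parallel evolution step `Z` on `{0,1,2}ⁿ`. -/
def Zstep (n : ℕ) (ω : Fin n → Fin 3) : Fin n → Fin 3 := fun j =>
  if swapPair n ω j then extStr n ω ((j : ℤ) + 1)
  else if swapPair n ω ((j : ℤ) - 1) then extStr n ω ((j : ℤ) - 1)
  else ω j

/-- Whether the (0-based) pair `(i, i+1)` forms the pattern `02` (two-type step). -/
def swapPair2 (n : ℕ) (ω : Fin n → Fin 3) (i : ℤ) : Bool :=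
  decide (extStr n ω i = 0 ∧ extStr n ω (i+1) = 2)

/-- The two-type parallel evolution step `Z⁽²⁾`, replacing every occurrence of the
substring `02` by `20` (strings over `{0,2}` are realized inside `{0,1,2}ⁿ`). -/
def Z2step (n : ℕ) (ω : Fin n → Fin 3) : Fin n → Fin 3 := fun j =>
  if swapPair2 n ω j then extStr n ω ((j : ℤ) + 1)
  else if swapPair2 n ω ((j : ℤ) - 1) then extStr n ω ((j : ℤ) - 1)
  else ω j

/-- Stabilization time of `ω` under repeated application of the step `Zf`:
`min {k ≥ 0 : Zf^[k] ω = Zf^[k+1] ω}` (`sInf`, which is `0` if no such `k` exists). -/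
noncomputable def stabTime (n : ℕ) (Zf : (Fin n → Fin 3) → (Fin n → Fin 3))
    (ω : Fin n → Fin 3) : ℕ :=
  sInf {k | Zf^[k] ω = Zf^[k + 1] ω}

/-- The two-type stabilization time `T_n^{(2)}`. -/
noncomputable def T2 (n : ℕ) (ω : Fin n → Fin 3) : ℕ := stabTime n (Z2step n) ω

/-- The three-type stabilization time `T_n`. -/
noncomputable def T3 (n : ℕ) (ω : Fin n → Fin 3) : ℕ := stabTime n (Zstep n) ω

/-- The projection `Π₁`, replacing each `1` by `0`. -/
def proj1 (n : ℕ) (ω : Fin n → Fin 3) : Fin n → Fin 3 := fun j => if ω j = 2 then 2 else 0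

/-- The excess `E_n(ω) = T_n(ω) - T_n^{(2)}(Π₁ ω)` (as an integer). -/
noncomputable def excess (n : ℕ) (ω : Fin n → Fin 3) : ℤ :=
  (T3 n ω : ℤ) - (T2 n (proj1 n ω) : ℤ)

/-- The Bernoulli measure on one letter: `2` with probability `p`, `0` with
probability `1 - p`. -/
noncomputable def bern3 (p : ℝ) : Measure (Fin 3) :=
  ENNReal.ofReal (1 - p) • Measure.dirac 0 + ENNReal.ofReal p • Measure.dirac 2

/-- The Bernoulli product measure of parameter `p` on strings of length `n`
(supported on two-type strings `{0,2}ⁿ`). -/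
noncomputable def bernString (n : ℕ) (p : ℝ) : Measure (Fin n → Fin 3) :=
  Measure.pi fun _ => bern3 p

/-! `Z` is a local rule: the new letter at a site is a function of the five letters around it,
and `Π₁` acts letter by letter, so the commutation is a finite check on windows of five letters.
It holds because under `Z` a `2` moves left exactly when its left neighbour is not a `2`: a `0`
always gives way, and so does a `1` (by the priority rule when it is preceded by a `0`). -/

def swapRule (a b c d : Fin 3) : Bool :=
  decide ((b < c ∧ b ≤ a ∧ d ≤ c) ∨ (a = 0 ∧ b = 1 ∧ c = 2))

def zLocal (a b c d e : Fin 3) : Fin 3 :=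
  if swapRule b c d e then d else if swapRule a b c d then b else c

def z2Local (b c d : Fin 3) : Fin 3 :=
  if decide (c = 0 ∧ d = 2) then d else if decide (b = 0 ∧ c = 2) then b else c

def proj1Letter (x : Fin 3) : Fin 3 := if x = 2 then 2 else 0

theorem proj1Letter_zLocal (a b c d e : Fin 3) :
    proj1Letter (zLocal a b c d e) =
      z2Local (proj1Letter b) (proj1Letter c) (proj1Letter d) := by
  decide +revert

section
variable (n : ℕ) (ω : Fin n → Fin 3)

theorem extStr_coe (j : Fin n) : extStr n ω j = ω j := by
  rw [extStr, dif_pos ⟨j.val.cast_nonneg, by exact_mod_cast j.isLt⟩]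
  simp

theorem proj1_apply (j : Fin n) : proj1 n ω j = proj1Letter (ω j) := rfl

theorem extStr_proj1 (i : ℤ) : extStr n (proj1 n ω) i = proj1Letter (extStr n ω i) := by
  unfold extStr proj1 proj1Letter
  split_ifs <;> simp_all

theorem Zstep_apply (j : Fin n) :
    Zstep n ω j = zLocal (extStr n ω (j - 2)) (extStr n ω (j - 1)) (extStr n ω j)
      (extStr n ω (j + 1)) (extStr n ω (j + 2)) := by
  have h₁ : (j : ℤ) - 1 - 1 = j - 2 := by ring
  have h₂ : (j : ℤ) - 1 + 1 = j := by ring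
  have h₃ : (j : ℤ) - 1 + 2 = j + 1 := by ring
  simp only [Zstep, zLocal, swapPair, swapRule, h₁, h₂, h₃, extStr_coe]

theorem Z2step_apply (j : Fin n) :
    Z2step n ω j = z2Local (extStr n ω (j - 1)) (extStr n ω j) (extStr n ω (j + 1)) := by
  have h : (j : ℤ) - 1 + 1 = j := by ring
  simp only [Z2step, z2Local, swapPair2, h, extStr_coe]

end

/-- For every `n` and every `ω ∈ {0,1,2}ⁿ`, the three-type evolution step
commutes with the projection `Π₁`: `Π₁(Z ω) = Z⁽²⁾(Π₁ ω)`. -/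
theorem proj1_Zstep_comm (n : ℕ) (ω : Fin n → Fin 3) :
    proj1 n (Zstep n ω) = Z2step n (proj1 n ω) := by
  funext j
  rw [proj1_apply, Zstep_apply, Z2step_apply]
  simp only [extStr_proj1]
  exact proj1Letter_zLocal _ _ _ _ _

end TASEP
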